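/- Let C be an ample concept class and t ⊆ X a set with t ∉ C such that C' := C ∪ {t} is isometric. Then C' is ample and t is a corner of C'. -/

import Mathlib

variable {X : Type} [Fintype X] [DecidableEq X]

/-- Hamming distance between two subsets of `X` (size of symmetric difference). -/
def hdist (c c' : Finset X) : ℕ := ((c \ c') ∪ (c' \ c)).card

/-- The restriction `C|Y = {c ∩ Y : c ∈ C}`. -/
def restrictTo (C : Finset (Finset X)) (Y : Finset X) : Finset (Finset X) :=
  C.image (· ∩ Y)

/-- `Y` is shattered by `C`, i.e. `C|Y = 2^Y`. -/
def Shatters (C : Finset (Finset X)) (Y : Finset X) : Prop :=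
  ∀ s ∈ Y.powerset, ∃ c ∈ C, c ∩ Y = s

instance (C : Finset (Finset X)) : DecidablePred (Shatters C) := fun _ => by
  unfold Shatters; infer_instance

/-- The family `X̄(C)` of all sets shattered by `C`. -/
def shatteredSets (C : Finset (Finset X)) : Finset (Finset X) :=
  Finset.univ.filter (Shatters C)

/-- The VC dimension of `C`: maximum size of a shattered set. -/
def vcDim (C : Finset (Finset X)) : ℕ := (shatteredSets C).sup Finset.card

/-- `C` is ample: `|C| = |X̄(C)|`. -/
def IsAmple (C : Finset (Finset X)) : Prop := C.card = (shatteredSets C).card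

/-- `C` is a maximum class of VC dimension `d`. -/
def IsMaximumClass (C : Finset (Finset X)) (d : ℕ) : Prop :=
  vcDim C = d ∧ C.card = ∑ i ∈ Finset.range (d + 1), (Fintype.card X).choose i

/-- `B` is a cube with support `Y`: `B = {t ∪ s : s ⊆ Y}` for some `t ⊆ X \ Y`. -/
def IsCubeS (B : Finset (Finset X)) (Y : Finset X) : Prop :=
  ∃ t : Finset X, t ∩ Y = ∅ ∧ B = Y.powerset.image (fun s => t ∪ s)

/-- `B` is a cube. -/
def IsCube (B : Finset (Finset X)) : Prop := ∃ Y, IsCubeS B Y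

/-- `B` is a cube of `C`: a cube contained in `C`. -/
def IsCubeOf (C B : Finset (Finset X)) : Prop := B ⊆ C ∧ IsCube B

/-- `B` is a maximal cube of `C` (maximal under inclusion among cubes of `C`). -/
def IsMaximalCubeOf (C B : Finset (Finset X)) : Prop :=
  IsCubeOf C B ∧ ∀ B', IsCubeOf C B' → B ⊆ B' → B = B'

/-- `c` is a corner of `C`: a concept of `C` belonging to a unique maximal cube of `C`. -/
def IsCornerOf (C : Finset (Finset X)) (c : Finset X) : Prop :=
  c ∈ C ∧ ∃! B, IsMaximalCubeOf C B ∧ c ∈ B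

/-- The one-inclusion graph `G(C)`. -/
def oneInclusionGraph (C : Finset (Finset X)) : SimpleGraph {c : Finset X // c ∈ C} where
  Adj c c' := hdist c.1 c'.1 = 1
  symm := by
    constructor
    intro a b h
    simpa [hdist, Finset.union_comm] using h
  loopless := by
    constructor
    intro a h
    simp [hdist] at h

/-- `C` is isometric: `G(C)` is connected and graph distances equal Hamming distances. -/
def IsIsometric (C : Finset (Finset X)) : Prop :=
  (oneInclusionGraph C).Connected ∧
  ∀ c c' : {c : Finset X // c ∈ C}, (oneInclusionGraph C).dist c c' = hdist c.1 c'.1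

/-- `C` is weakly isometric: `G(C)` is connected and graph distances equal Hamming
distances for pairs at Hamming distance at most 2. -/
def IsWeaklyIsometric (C : Finset (Finset X)) : Prop :=
  (oneInclusionGraph C).Connected ∧
  ∀ c c' : {c : Finset X // c ∈ C}, hdist c.1 c'.1 ≤ 2 →
    (oneInclusionGraph C).dist c c' = hdist c.1 c'.1

/-- A list of concepts is a corner peeling if it has no duplicates and each element is a
corner of the corresponding level set. -/
def IsCornerPeeling (l : List (Finset X)) : Prop :=
  l.Nodup ∧ ∀ i (h : i < l.length), IsCornerOf ((l.take (i + 1)).toFinset) (l.get ⟨i, h⟩)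

/-- `C` is dismantlable: it admits a corner peeling ordering of all its concepts. -/
def Dismantlable (C : Finset (Finset X)) : Prop :=
  ∃ l : List (Finset X), l.toFinset = C ∧ IsCornerPeeling l

/-- Non-clashing condition for a map `r`. -/
def NonClashing (C : Finset (Finset X)) (r : Finset X → Finset X) : Prop :=
  ∀ c ∈ C, ∀ c' ∈ C, c ≠ c' → c ∩ (r c ∪ r c') ≠ c' ∩ (r c ∪ r c')

/-- `r` is a representation map for `C`: a non-clashing bijection from `C` onto `X̄(C)`. -/
def IsRepMap (C : Finset (Finset X)) (r : Finset X → Finset X) : Prop :=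
  (∀ c ∈ C, r c ∈ shatteredSets C) ∧
  Set.InjOn r ↑C ∧
  (∀ Y ∈ shatteredSets C, ∃ c ∈ C, r c = Y) ∧
  NonClashing C r

/-- `C` admits an unlabeled sample compression scheme of size `k`. -/
def HasUSCS (C : Finset (Finset X)) (k : ℕ) : Prop :=
  ∃ (α : Finset X → Finset X → Finset X) (β : Finset X → Finset X),
    ∀ (Y : Finset X), ∀ c ∈ C,
      α Y (c ∩ Y) ⊆ Y ∧ (α Y (c ∩ Y)).card ≤ k ∧
      β (α Y (c ∩ Y)) ∈ C ∧ β (α Y (c ∩ Y)) ∩ Y = c ∩ Y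

/-- The cube of `2^X` with support `Y` containing `c`. -/
def cubeAt (c Y : Finset X) : Finset (Finset X) :=
  Y.powerset.image (fun s => (c \ Y) ∪ s)

/-- Condition (C1): for every `c ∈ C`, the cube with support `r c` containing `c`
is a cube of `C`. -/
def CondC1 (C : Finset (Finset X)) (r : Finset X → Finset X) : Prop :=
  ∀ c ∈ C, cubeAt c (r c) ⊆ C

/-- Condition (C2): every cube of `C` has a unique concept `c` with `r c ∩ supp B = ∅`. -/
def CondC2 (C : Finset (Finset X)) (r : Finset X → Finset X) : Prop :=
  ∀ B Y, B ⊆ C → IsCubeS B Y → ∃! c, c ∈ B ∧ r c ∩ Y = ∅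

/-- The facet of the cross-polytope corresponding to a subset `c ⊆ X`:
`+x ∈ σ_c` iff `x ∈ c` (where `+x = Sum.inl x` and `-x = Sum.inr x`). -/
def facet (c : Finset X) : Finset (X ⊕ X) :=
  c.image Sum.inl ∪ (Finset.univ \ c).image Sum.inr

/-- A list of facets of the cross-polytope is a partial shelling. -/
def IsPartialShelling (L : List (Finset (X ⊕ X))) : Prop :=
  L.Nodup ∧ ∀ i j, i < j → j < L.length →
    ∃ k < j, ((L.getD k ∅) ∩ (L.getD j ∅)).card = Fintype.card X - 1 ∧
      (L.getD i ∅) ∩ (L.getD j ∅) ⊆ (L.getD k ∅) ∩ (L.getD j ∅)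

/-- `Q` is an incomplete cube for `(C, D)` with support `σ`: a cube of `C` whose
support `σ` is a missed simplex (shattered by `C` but not by `D`). -/
def IsIncompleteCube (C D Q : Finset (Finset X)) (σ : Finset X) : Prop :=
  Q ⊆ C ∧ IsCubeS Q σ ∧ Shatters C σ ∧ ¬ Shatters D σ

/-- `c` is the source of the incomplete cube `Q` with support `σ`:
`c ∈ Q` and `c ∩ σ ∉ D|σ`. -/
def IsSource (D Q : Finset (Finset X)) (σ : Finset X) (c : Finset X) : Prop :=
  c ∈ Q ∧ c ∩ σ ∉ restrictTo D σ

/-- The restriction `C_x = C|(X \ {x})`, with concepts viewed as subsets of `X`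
avoiding `x`. -/
def restrictX (C : Finset (Finset X)) (x : X) : Finset (Finset X) :=
  C.image (·.erase x)

/-- The reduction `C^x = {c ⊆ X \ {x} : c ∈ C and c ∪ {x} ∈ C}`. -/
def reduction (C : Finset (Finset X)) (x : X) : Finset (Finset X) :=
  C.filter (fun c => x ∉ c ∧ insert x c ∈ C)

/-- The interval `B(c,c') = {t : d(c,t) + d(t,c') = d(c,c')}`. -/
def interval (c c' : Finset X) : Finset (Finset X) :=
  Finset.univ.filter (fun t => hdist c t + hdist t c' = hdist c c')

/-- `C'` is convex in `C`. -/
def IsConvexIn (C C' : Finset (Finset X)) : Prop :=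
  ∀ c ∈ C', ∀ c'' ∈ C', interval c c'' ∩ C ⊆ C'

/-- `C'` is locally convex in `C`. -/
def IsLocallyConvexIn (C C' : Finset (Finset X)) : Prop :=
  ∀ c ∈ C', ∀ c'' ∈ C', hdist c c'' = 2 → interval c c'' ∩ C ⊆ C'

/-- `C` is a conditional antimatroid: contains `∅`, closed under intersection, and
every concept is generated by its extremal points. -/
def IsCondAntimatroid (C : Finset (Finset X)) : Prop :=
  ∅ ∈ C ∧ (∀ c ∈ C, ∀ c' ∈ C, c ∩ c' ∈ C) ∧
  ∀ c ∈ C, ∀ c' ∈ C, (c.filter (fun x => c.erase x ∈ C)) ⊆ c' → c ⊆ c'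

/-!
By Pajor's inequality `|D| ≤ |X̄(D)|`, adding `t` to the ample class `C` creates a new shattered
set `Y`, and `t ∩ Y` is the only trace on `Y` missing from `C`. Isometry pins `Y` down: for
`x ∈ Y`, a geodesic from `t` to a concept whose trace on `Y` is `t ∩ Y` with `x` flipped must start
by flipping `x`; conversely a neighbour `t Δ {x} ∈ C` with `x ∉ Y` would realise the missing
trace. So `Y = {x | t Δ {x} ∈ C}` is the only new shattered set, and `C ∪ {t}` is ample.

An ample class contains a cube on every set it shatters (induction through the reduction `C^x`).
The cube on `Y` must pass through `t`, while every cube of `C ∪ {t}` through `t` has its support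
among the directions `x` with `t Δ {x} ∈ C`, that is inside `Y`. Hence the cube through `t` with
support `Y` is the unique maximal cube containing `t`.
-/

open scoped symmDiff Finset

section

variable {α : Type} [DecidableEq α]

lemma shatters_iff_finsetShatters {C : Finset (Finset α)} {Y : Finset α} :
    Shatters C Y ↔ C.Shatters Y := by
  simp only [Shatters, Finset.Shatters, Finset.mem_powerset, Finset.inter_comm Y]

lemma shatteredSets_eq_shatterer [Fintype α] (C : Finset (Finset α)) :
    shatteredSets C = C.shatterer := by
  ext Y
  simp [shatteredSets, shatters_iff_finsetShatters]

lemma isAmple_iff [Fintype α] {C : Finset (Finset α)} : IsAmple C ↔ #C = #C.shatterer := by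
  rw [IsAmple, shatteredSets_eq_shatterer]

lemma symmDiff_singleton_ne_self (t : Finset α) (x : α) : t ∆ {x} ≠ t := by
  simp [symmDiff_eq_left]

lemma inter_symmDiff_singleton_of_notMem {Y : Finset α} {x : α} (hx : x ∉ Y) (t : Finset α) :
    Y ∩ (t ∆ {x}) = Y ∩ t := by
  ext z
  by_cases hz : z = x <;> simp_all [Finset.mem_symmDiff]

section Reduction

variable {D : Finset (Finset α)} {x : α} {Y : Finset α}

lemma card_restrictX_add_card_reduction (D : Finset (Finset α)) (x : α) :
    #(restrictX D x) + #(reduction D x) = #D := by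
  have hunion : restrictX D x = D.memberSubfamily x ∪ D.nonMemberSubfamily x :=
    (Finset.memberSubfamily_union_nonMemberSubfamily x D).symm
  have hinter : reduction D x = D.memberSubfamily x ∩ D.nonMemberSubfamily x := by
    ext c
    simp only [reduction, Finset.mem_filter, Finset.mem_inter, Finset.mem_memberSubfamily,
      Finset.mem_nonMemberSubfamily]
    tauto
  rw [hunion, hinter, Finset.card_union_add_card_inter,
    Finset.card_memberSubfamily_add_card_nonMemberSubfamily]

lemma notMem_of_shatters {C : Finset (Finset α)} (hC : ∀ c ∈ C, x ∉ c) (hY : C.Shatters Y) :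
    x ∉ Y := fun hx ↦
  let ⟨c, hc, hYc⟩ := hY.exists_superset
  hC c hc (hYc hx)

lemma Finset.Shatters.of_restrictX (h : (restrictX D x).Shatters Y) :
    D.Shatters Y ∧ x ∉ Y := by
  have hx : x ∉ Y := notMem_of_shatters (by simp [restrictX]) h
  refine ⟨fun u hu ↦ ?_, hx⟩
  obtain ⟨_, hc', rfl⟩ := h hu
  obtain ⟨c, hc, rfl⟩ := Finset.mem_image.1 hc'
  exact ⟨c, hc, by rw [Finset.inter_erase, Finset.erase_eq_of_notMem (by simp [hx])]⟩

lemma Finset.Shatters.insert_of_reduction (h : (reduction D x).Shatters Y) :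
    D.Shatters (insert x Y) ∧ x ∉ Y := by
  have hx : x ∉ Y := notMem_of_shatters (fun c hc ↦ (Finset.mem_filter.1 hc).2.1) h
  refine ⟨fun u hu ↦ ?_, hx⟩
  obtain ⟨c, hc, hYc⟩ := h (Finset.subset_insert_iff.1 hu)
  obtain ⟨hcD, hxc, hxcD⟩ := Finset.mem_filter.1 hc
  by_cases hxu : x ∈ u
  · refine ⟨insert x c, hxcD, ?_⟩
    rw [← Finset.insert_inter_distrib, hYc, Finset.insert_erase hxu]
  · refine ⟨c, hcD, ?_⟩
    rw [Finset.insert_inter_of_notMem hxc, hYc, Finset.erase_eq_of_notMem hxu]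

end Reduction

section Cubes

variable {c e : Finset α} {Y Z : Finset α}

lemma mem_cubeAt : e ∈ cubeAt c Y ↔ e \ Y = c \ Y := by
  constructor
  · rintro he
    obtain ⟨u, hu, rfl⟩ := Finset.mem_image.1 he
    rw [Finset.union_sdiff_distrib, Finset.sdiff_idem,
      Finset.sdiff_eq_empty_iff_subset.2 (Finset.mem_powerset.1 hu), Finset.union_empty]
  · intro he
    exact Finset.mem_image.2 ⟨e ∩ Y, Finset.mem_powerset.2 Finset.inter_subset_right,
      by rw [← he, Finset.sdiff_union_inter]⟩

lemma self_mem_cubeAt (c Y : Finset α) : c ∈ cubeAt c Y := mem_cubeAt.2 rfl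

lemma cubeAt_eq_of_mem (he : e ∈ cubeAt c Y) : cubeAt e Y = cubeAt c Y := by
  ext f
  rw [mem_cubeAt, mem_cubeAt, mem_cubeAt.1 he]

lemma cubeAt_mono (c : Finset α) (h : Z ⊆ Y) : cubeAt c Z ⊆ cubeAt c Y := fun e he ↦ by
  rw [mem_cubeAt] at he ⊢
  rw [← sup_eq_right.2 h, ← sdiff_sdiff_left, he, sdiff_sdiff_left]

lemma symmDiff_singleton_mem_cubeAt (c : Finset α) {x : α} (hx : x ∈ Y) :
    c ∆ {x} ∈ cubeAt c Y := by
  rw [mem_cubeAt]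
  ext z
  by_cases hz : z = x <;> simp_all [Finset.mem_symmDiff]

lemma shatters_cubeAt (c Y : Finset α) : (cubeAt c Y).Shatters Y := fun u hu ↦
  ⟨(c \ Y) ∪ u, Finset.mem_image_of_mem _ (Finset.mem_powerset.2 hu), by
    rw [Finset.inter_union_distrib_left, Finset.inter_sdiff_self, Finset.empty_union,
      Finset.inter_eq_right.2 hu]⟩

lemma isCubeS_cubeAt (c Y : Finset α) : IsCubeS (cubeAt c Y) Y :=
  ⟨c \ Y, Finset.sdiff_inter_self Y c, rfl⟩

lemma IsCubeS.eq_cubeAt {B : Finset (Finset α)} (hB : IsCubeS B Y) (hc : c ∈ B) :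
    B = cubeAt c Y := by
  obtain ⟨b, hb, rfl⟩ := hB
  have hB : Y.powerset.image (b ∪ ·) = cubeAt b Y := by
    rw [cubeAt, Finset.sdiff_eq_self_of_disjoint (Finset.disjoint_iff_inter_eq_empty.2 hb)]
  rw [hB] at hc ⊢
  exact (cubeAt_eq_of_mem hc).symm

lemma isCornerOf_of_cubeAt_subset {D : Finset (Finset α)} {t : Finset α} (hY : cubeAt t Y ⊆ D)
    (hmax : ∀ Z, cubeAt t Z ⊆ D → Z ⊆ Y) : IsCornerOf D t := by
  have hcube : ∀ B, IsCubeOf D B → t ∈ B → B ⊆ cubeAt t Y := by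
    rintro B ⟨hBD, Z, hZ⟩ htB
    rw [hZ.eq_cubeAt htB] at hBD ⊢
    exact cubeAt_mono t (hmax Z hBD)
  have htY := self_mem_cubeAt t Y
  have hYcube : IsCubeOf D (cubeAt t Y) := ⟨hY, Y, isCubeS_cubeAt t Y⟩
  refine ⟨hY htY, cubeAt t Y,
    ⟨⟨hYcube, fun B hB hsub ↦ hsub.antisymm (hcube B hB (hsub htY))⟩, htY⟩, ?_⟩
  rintro B ⟨⟨hB, hBmax⟩, htB⟩
  exact hBmax _ hYcube (hcube B hB htB)

end Cubes

section Ample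

variable [Fintype α] {D : Finset (Finset α)}

lemma isAmple_reduction (hD : IsAmple D) (x : α) :
    IsAmple (reduction D x) ∧
      ∀ Y, D.Shatters Y → x ∈ Y → (reduction D x).Shatters (Y.erase x) := by
  rw [isAmple_iff] at hD ⊢
  set R := (reduction D x).shatterer
  have hU : (restrictX D x).shatterer ⊆ D.shatterer.filter (x ∉ ·) := fun Y hY ↦ by
    simpa using (Finset.mem_shatterer.1 hY).of_restrictX
  have hR : R.image (insert x) ⊆ D.shatterer.filter (x ∈ ·) := by
    simp only [Finset.image_subset_iff, Finset.mem_filter, Finset.mem_shatterer, R]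
    exact fun Y hY ↦ ⟨hY.insert_of_reduction.1, Finset.mem_insert_self x Y⟩
  have hxR : ∀ Y ∈ R, x ∉ Y := fun Y hY ↦ (Finset.mem_shatterer.1 hY).insert_of_reduction.2
  have hinj : #(R.image (insert x)) = #R := Finset.card_image_of_injOn fun Y₁ h₁ Y₂ h₂ h ↦ by
    rw [← Finset.erase_insert (hxR Y₁ h₁), ← Finset.erase_insert (hxR Y₂ h₂)]
    exact congrArg (Finset.erase · x) h
  -- Pajor's inequality for `restrictX D x` and `reduction D x` splits `#D ≤ #D.shatterer`;
  -- ampleness of `D` turns every step into an equality.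
  have hle₁ : #(restrictX D x) ≤ #(D.shatterer.filter (x ∉ ·)) :=
    (Finset.card_le_card_shatterer _).trans (Finset.card_le_card hU)
  have hle₂ : #(reduction D x) ≤ #R := Finset.card_le_card_shatterer _
  have hle₃ : #R ≤ #(D.shatterer.filter (x ∈ ·)) := hinj ▸ Finset.card_le_card hR
  have htotal : #(restrictX D x) + #(reduction D x) =
      #(D.shatterer.filter (x ∈ ·)) + #(D.shatterer.filter (x ∉ ·)) := by
    rw [card_restrictX_add_card_reduction, hD, Finset.card_filter_add_card_filter_not]
  have himage : R.image (insert x) = D.shatterer.filter (x ∈ ·) :=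
    Finset.eq_of_subset_of_card_le hR (by omega)
  refine ⟨by omega, fun Y hY hxY ↦ ?_⟩
  have hYR : Y ∈ R.image (insert x) :=
    himage ▸ Finset.mem_filter.2 ⟨Finset.mem_shatterer.2 hY, hxY⟩
  obtain ⟨Y', hY', rfl⟩ := Finset.mem_image.1 hYR
  rw [Finset.erase_insert (hxR Y' hY')]
  exact Finset.mem_shatterer.1 hY'

lemma IsAmple.exists_cubeAt_subset {Y : Finset α} (hD : IsAmple D) (hY : D.Shatters Y) :
    ∃ c, cubeAt c Y ⊆ D := by
  induction Y using Finset.induction_on generalizing D with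
  | empty =>
    obtain ⟨c, hc⟩ := Finset.shatters_empty.1 hY
    exact ⟨c, by simpa [cubeAt] using hc⟩
  | insert x Y hxY ih =>
    obtain ⟨hred, hshat⟩ := isAmple_reduction hD x
    obtain ⟨c, hc⟩ := ih hred (by simpa [hxY] using hshat _ hY (Finset.mem_insert_self x Y))
    have hxc : x ∉ c := (Finset.mem_filter.1 (hc (self_mem_cubeAt c Y))).2.1
    refine ⟨c, fun e he ↦ ?_⟩
    have herase : e.erase x ∈ reduction D x := hc <| by
      rw [mem_cubeAt] at he ⊢
      rw [Finset.erase_sdiff_comm, ← Finset.sdiff_insert, he, Finset.sdiff_insert,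
        Finset.erase_eq_of_notMem (by simp [hxc])]
    obtain ⟨hD₀, -, hD₁⟩ := Finset.mem_filter.1 herase
    by_cases hxe : x ∈ e
    · rwa [Finset.insert_erase hxe] at hD₁
    · rwa [Finset.erase_eq_of_notMem hxe] at hD₀

end Ample

section Isometric

variable [Fintype α] {D : Finset (Finset α)}

lemma IsIsometric.exists_symmDiff_singleton_mem (hD : IsIsometric D) {c c' : Finset α}
    (hc : c ∈ D) (hc' : c' ∈ D) (hne : c ≠ c') : ∃ z ∈ c ∆ c', c ∆ {z} ∈ D := by
  obtain ⟨hconn, hdist⟩ := hD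
  obtain ⟨p, hp⟩ := hconn.exists_walk_length_eq_dist ⟨c, hc⟩ ⟨c', hc'⟩
  obtain ⟨w, hadj, q, rfl⟩ :=
    SimpleGraph.Walk.exists_eq_cons_of_ne (fun h ↦ hne (congrArg Subtype.val h)) p
  have hcw : #(c ∆ w.1) = 1 := hadj
  obtain ⟨z, hz⟩ := Finset.card_eq_one.1 hcw
  have hwz : w.1 = c ∆ {z} := by rw [← hz, symmDiff_symmDiff_cancel_left]
  have hcloser : #(w.1 ∆ c') < #(c ∆ c') := by
    have hq : #(w.1 ∆ c') ≤ q.length :=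
      (hdist w ⟨c', hc'⟩).symm.trans_le (SimpleGraph.dist_le q)
    have hp' : q.length + 1 = #(c ∆ c') := by
      rw [← SimpleGraph.Walk.length_cons hadj, hp]
      exact hdist _ _
    omega
  refine ⟨z, by_contra fun hz' ↦ (Finset.card_le_card ?_).not_gt hcloser, hwz ▸ w.2⟩
  intro y hy
  have hyz : y ≠ z := fun h ↦ hz' (h ▸ hy)
  rw [hwz]
  simp_all [Finset.mem_symmDiff]

end Isometric

section Insert

variable {C : Finset (Finset α)} {t Y : Finset α}

lemma inter_ne_of_shatters_insert (hY : (insert t C).Shatters Y) (hY' : ¬C.Shatters Y)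
    {c : Finset α} (hc : c ∈ C) : Y ∩ c ≠ Y ∩ t := by
  intro heq
  refine hY' fun u hu ↦ ?_
  obtain ⟨e, he, rfl⟩ := hY hu
  rcases Finset.mem_insert.1 he with rfl | he
  · exact ⟨c, hc, heq⟩
  · exact ⟨e, he, rfl⟩

lemma mem_of_shatters_insert (hY : (insert t C).Shatters Y) (hY' : ¬C.Shatters Y) {x : α}
    (hx : t ∆ {x} ∈ C) : x ∈ Y :=
  by_contra fun hxY ↦
    inter_ne_of_shatters_insert hY hY' hx (inter_symmDiff_singleton_of_notMem hxY t)

variable [Fintype α]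

lemma symmDiff_singleton_mem_of_shatters_insert (hiso : IsIsometric (insert t C))
    (hY : (insert t C).Shatters Y) (hY' : ¬C.Shatters Y) {x : α} (hx : x ∈ Y) :
    t ∆ {x} ∈ C := by
  -- The first step of a geodesic from `t` to `c` flips some `z ∈ t ∆ c`; it lies in `Y`, where
  -- `t` and `c` differ only at `x`.
  obtain ⟨c, hc, hYc⟩ := hY (t := (Y ∩ t) ∆ {x})
    (symmDiff_le_sup.trans (Finset.union_subset Finset.inter_subset_left
      (Finset.singleton_subset_iff.2 hx)))
  have hct : c ≠ t := by
    rintro rfl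
    exact symmDiff_singleton_ne_self _ x hYc.symm
  obtain ⟨z, hz, hzt⟩ :=
    hiso.exists_symmDiff_singleton_mem (Finset.mem_insert_self t C) hc hct.symm
  have hzC : t ∆ {z} ∈ C :=
    (Finset.mem_insert.1 hzt).resolve_left (symmDiff_singleton_ne_self t z)
  have hzx : z ∈ Y ∩ (t ∆ c) := Finset.mem_inter.2 ⟨mem_of_shatters_insert hY hY' hzC, hz⟩
  rw [show Y ∩ (t ∆ c) = (Y ∩ t) ∆ (Y ∩ c) from inf_symmDiff_distrib_left Y t c, hYc,
    symmDiff_symmDiff_cancel_left, Finset.mem_singleton] at hzx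
  exact hzx ▸ hzC

lemma eq_filter_of_shatters_insert (hiso : IsIsometric (insert t C))
    (hY : (insert t C).Shatters Y) (hY' : ¬C.Shatters Y) :
    Y = Finset.univ.filter (fun x ↦ t ∆ {x} ∈ C) := by
  ext x
  simpa using ⟨symmDiff_singleton_mem_of_shatters_insert hiso hY hY',
    mem_of_shatters_insert hY hY'⟩

lemma exists_shatters_insert_not_shatters (hC : IsAmple C) (ht : t ∉ C) :
    ∃ Y, (insert t C).Shatters Y ∧ ¬C.Shatters Y := by
  rw [isAmple_iff] at hC
  by_contra! h
  have hsub : (insert t C).shatterer ⊆ C.shatterer := fun Y hY ↦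
    Finset.mem_shatterer.2 (h Y (Finset.mem_shatterer.1 hY))
  have := Finset.card_le_card hsub
  have := Finset.card_le_card_shatterer (insert t C)
  rw [Finset.card_insert_of_notMem ht] at this
  omega

lemma IsAmple.insert_of_isIsometric (hC : IsAmple C) (ht : t ∉ C)
    (hiso : IsIsometric (insert t C)) : IsAmple (insert t C) := by
  set Y₀ := Finset.univ.filter (fun x ↦ t ∆ {x} ∈ C)
  have hsub : (insert t C).shatterer ⊆ insert Y₀ C.shatterer := fun Y hY ↦ by
    rw [Finset.mem_shatterer] at hY
    by_cases hCY : C.Shatters Y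
    · exact Finset.mem_insert_of_mem (Finset.mem_shatterer.2 hCY)
    · exact Finset.mem_insert.2 (Or.inl (eq_filter_of_shatters_insert hiso hY hCY))
  rw [isAmple_iff] at hC ⊢
  have := Finset.card_le_card hsub
  have := Finset.card_insert_le Y₀ C.shatterer
  have := Finset.card_le_card_shatterer (insert t C)
  rw [Finset.card_insert_of_notMem ht] at *
  omega

end Insert

end

/-- If `C` is ample, `t ∉ C`, and `C ∪ {t}` is isometric, then `C ∪ {t}`
is ample and `t` is a corner of `C ∪ {t}`. -/
theorem stmt_5 (C : Finset (Finset X)) (hC : IsAmple C) (t : Finset X) (ht : t ∉ C)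
    (hiso : IsIsometric (insert t C)) :
    IsAmple (insert t C) ∧ IsCornerOf (insert t C) t := by
  have hample := hC.insert_of_isIsometric ht hiso
  obtain ⟨Y, hY, hY'⟩ := exists_shatters_insert_not_shatters hC ht
  refine ⟨hample, isCornerOf_of_cubeAt_subset (Y := Y) ?_ fun Z hZ x hx ↦ ?_⟩
  · obtain ⟨c, hc⟩ := hample.exists_cubeAt_subset hY
    obtain ⟨e, he, hYe⟩ := shatters_cubeAt c Y Finset.inter_subset_left
    have het : e = t := by
      by_contra hne
      exact inter_ne_of_shatters_insert hY hY'
        ((Finset.mem_insert.1 (hc he)).resolve_left hne) hYe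
    rwa [cubeAt_eq_of_mem (het ▸ he)]
  · have hxZ := hZ (symmDiff_singleton_mem_cubeAt t hx)
    exact mem_of_shatters_insert hY hY'
      ((Finset.mem_insert.1 hxZ).resolve_left (symmDiff_singleton_ne_self t x))
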